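/- arXiv:2508.07411 — 2 statements merged into one kernel-verified Lean document; each statement's English description precedes it below -/
import Mathlib

section
/- Let a < b be reals, let r ≥ 1 be a real number, and let f : [a,b) → ℝ be differentiable, uniformly convex with modulus Φ(x) = x^{2r} (i.e. t·f(x) + (1−t)·f(y) ≥ f(t·x + (1−t)·y) + t·(1−t)·|x−y|^{2r} for all x, y ∈ [a,b), t ∈ [0,1]), and satisfying f′(y) − f′(x) ≥ sign(y−x)·2r·|y−x|^{2r−1} for all x, y ∈ [a,b). Let n ≥ 2 be an integer, fix 1 ≤ k ≤ n−1, and let x₁ ≤ x₂ ≤ … ≤ xₙ with all xᵢ ∈ [a,b). Let t₁,…,tₙ be real numbers with Σ_{i=1}^n tᵢ = 1, satisfying: 0 ≤ Σ_{i=1}^{j} tᵢ ≤ 1 for all 1 ≤ j ≤ n; Σ_{i=1}^{j} tᵢ ≤ Σ_{i=1}^{k} tᵢ for all j ≤ k; t_{k+1} > 0; 0 ≤ Σ_{i=k+1}^{l} tᵢ ≤ Σ_{i=k+1}^{n} tᵢ for all k+1 ≤ l ≤ n; and 0 < P_k < 1 where P_k := Σ_{i=1}^{k} tᵢ. Set x̄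 = Σ_{i=1}^n tᵢxᵢ, yᵢ = xᵢ − x̄, and x_{1,k} = Σ_{i=1}^{k} tᵢxᵢ / P_k. Then |x_{1,k} − x̄| ≤ ( Σ_{i=1}^n tᵢ|yᵢ|^{2r} / ( P_k + P_k^{2r}·(1−P_k)^{1−2r} ) )^{1/(2r)} ≤ ( ( Σ_{i=1}^n tᵢf(xᵢ) − f(x̄) ) / ( P_k + P_k^{2r}·(1−P_k)^{1−2r} ) )^{1/(2r)}. -/
/-!
Subtracting the tangent line at the weighted mean `c` turns a function whose derivative crosses
its value at `c` into one that decreases up to `c` and increases after it. For such a function `G`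
and a monotone sequence, Abel summation against the Jensen–Steffensen partial sums gives
`G c ≤ ∑ tᵢ G(xᵢ)`, even though some `tᵢ` may be negative.

Applied to `f - |· - x̄|^(2r)`, this bounds the Jensen gap `∑ tᵢ f(xᵢ) - f(x̄)` from below by
`∑ tᵢ |yᵢ|^(2r)`. Applied to `|·|^(2r)` on the blocks `[1, k]` and `[k + 1, n]` separately, with
normalised weights, whose means are `u = x_{1,k} - x̄` and `-P u / (1 - P)`, it gives
`(P + P^(2r) (1 - P)^(1 - 2r)) |u|^(2r) ≤ ∑ tᵢ |yᵢ|^(2r)`.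
-/

open Finset

theorem Finset.sum_Icc_consecutive {M : Type*} [AddCommMonoid M] (f : ℕ → M) {p m q : ℕ}
    (hpm : p ≤ m + 1) (hmq : m ≤ q) :
    ∑ i ∈ Icc p m, f i + ∑ i ∈ Icc (m + 1) q, f i = ∑ i ∈ Icc p q, f i := by
  simp only [← Ico_add_one_right_eq_Icc]
  exact sum_Ico_consecutive f hpm (by omega)

theorem sum_mul_nonneg_of_antitoneOn {t F : ℕ → ℝ} {p q : ℕ}
    (ht : ∀ j ∈ Icc p q, 0 ≤ ∑ i ∈ Icc p j, t i) (hF : AntitoneOn F (Set.Icc p q))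
    (hF0 : ∀ i ∈ Icc p q, 0 ≤ F i) : 0 ≤ ∑ i ∈ Icc p q, t i * F i := by
  induction q generalizing F with
  | zero =>
    rcases Nat.eq_zero_or_pos p with rfl | hp
    · simpa using mul_nonneg (by simpa using ht 0 (by simp)) (hF0 0 (by simp))
    · simp [Icc_eq_empty_of_lt hp]
  | succ q ih =>
    rcases lt_or_ge (q + 1) p with hp | hp
    · simp [Icc_eq_empty_of_lt hp]
    rcases hp.eq_or_lt with rfl | hp
    · simpa using mul_nonneg (by simpa using ht (q + 1) (by simp)) (hF0 (q + 1) (by simp))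
    have hrest : 0 ≤ ∑ i ∈ Icc p q, t i * (F i - F (q + 1)) := by
      refine ih (fun j hj => ht j (by simp at hj ⊢; omega)) ?_ (fun i hi => ?_)
      · exact fun i hi j hj hij => sub_le_sub_right
          (hF ⟨hi.1, by simp at hi ⊢; omega⟩ ⟨hj.1, by simp at hj ⊢; omega⟩ hij) _
      · simp only [mem_Icc] at hi
        exact sub_nonneg.2 (hF ⟨hi.1, by omega⟩ ⟨by omega, le_rfl⟩ (by omega))
    have hlast := mul_nonneg (ht (q + 1) (by simp; omega)) (hF0 (q + 1) (by simp; omega))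
    have hsplit : ∑ i ∈ Icc p (q + 1), t i * F i
        = ∑ i ∈ Icc p q, t i * (F i - F (q + 1)) + (∑ i ∈ Icc p (q + 1), t i) * F (q + 1) := by
      rw [sum_Icc_succ_top (by omega), sum_Icc_succ_top (by omega)]
      simp only [mul_sub, sum_sub_distrib, ← sum_mul]
      ring
    linarith

theorem sum_mul_nonneg_of_monotoneOn {t F : ℕ → ℝ} {p q : ℕ}
    (ht : ∀ j ∈ Icc p q, 0 ≤ ∑ i ∈ Icc j q, t i) (hF : MonotoneOn F (Set.Icc p q))
    (hF0 : ∀ i ∈ Icc p q, 0 ≤ F i) : 0 ≤ ∑ i ∈ Icc p q, t i * F i := by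
  induction h : q - p generalizing p F with
  | zero =>
    rcases lt_or_ge q p with hp | hp
    · simp [Icc_eq_empty_of_lt hp]
    obtain rfl : p = q := by omega
    simpa using mul_nonneg (by simpa using ht p (by simp)) (hF0 p (by simp))
  | succ d ih =>
    have hrest : 0 ≤ ∑ i ∈ Icc (p + 1) q, t i * (F i - F p) := by
      refine ih (fun j hj => ht j (by simp at hj ⊢; omega)) ?_ (fun i hi => ?_) (by omega)
      · exact fun i hi j hj hij => sub_le_sub_right
          (hF ⟨by simp at hi ⊢; omega, hi.2⟩ ⟨by simp at hj ⊢; omega, hj.2⟩ hij) _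
      · simp only [mem_Icc] at hi
        exact sub_nonneg.2 (hF ⟨le_rfl, by omega⟩ ⟨by omega, hi.2⟩ (by omega))
    have hfirst := mul_nonneg (ht p (by simp; omega)) (hF0 p (by simp; omega))
    have hsplit : ∑ i ∈ Icc p q, t i * F i
        = ∑ i ∈ Icc (p + 1) q, t i * (F i - F p) + (∑ i ∈ Icc p q, t i) * F p := by
      have hbot (G : ℕ → ℝ) : ∑ i ∈ Icc p q, G i = G p + ∑ i ∈ Icc (p + 1) q, G i := by
        rw [← sum_Icc_consecutive G (m := p) (by omega) (by omega), Icc_self, sum_singleton]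
      rw [hbot, hbot t]
      simp only [mul_sub, sum_sub_distrib, ← sum_mul]
      ring
    linarith

structure JensenSteffensenWeights (t : ℕ → ℝ) (p q : ℕ) : Prop where
  sum_eq_one : ∑ i ∈ Icc p q, t i = 1
  partialSum_nonneg : ∀ j ∈ Icc p q, 0 ≤ ∑ i ∈ Icc p j, t i
  partialSum_le_one : ∀ j ∈ Icc p q, ∑ i ∈ Icc p j, t i ≤ 1

namespace JensenSteffensenWeights

variable {t x : ℕ → ℝ} {p q : ℕ}

theorem le (hw : JensenSteffensenWeights t p q) : p ≤ q := by
  by_contra h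
  simpa [Icc_eq_empty_of_lt (not_le.1 h)] using hw.sum_eq_one

theorem tailSum_nonneg (hw : JensenSteffensenWeights t p q) :
    ∀ j ∈ Icc p q, 0 ≤ ∑ i ∈ Icc j q, t i := by
  intro j hj
  rw [mem_Icc] at hj
  rcases hj.1.eq_or_lt with rfl | hpj
  · exact hw.sum_eq_one ▸ zero_le_one
  · have hsplit := sum_Icc_consecutive t (p := p) (m := j - 1) (q := q) (by omega) (by omega)
    rw [Nat.sub_add_cancel (by omega), hw.sum_eq_one] at hsplit
    linarith [hw.partialSum_le_one (j - 1) (by simp; omega)]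

theorem le_sum_mul (hw : JensenSteffensenWeights t p q) (hx : MonotoneOn x (Set.Icc p q)) :
    x p ≤ ∑ i ∈ Icc p q, t i * x i := by
  have h := sum_mul_nonneg_of_monotoneOn (F := fun i => x i - x p) hw.tailSum_nonneg
    (fun i hi j hj hij => sub_le_sub_right (hx hi hj hij) _)
    (fun i hi => sub_nonneg.2 (hx ⟨le_rfl, hw.le⟩ (by simpa using hi) (mem_Icc.1 hi).1))
  simp only [mul_sub, sum_sub_distrib, ← sum_mul, hw.sum_eq_one, one_mul] at h
  linarith

theorem sum_mul_le (hw : JensenSteffensenWeights t p q) (hx : MonotoneOn x (Set.Icc p q)) :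
    ∑ i ∈ Icc p q, t i * x i ≤ x q := by
  have h := sum_mul_nonneg_of_antitoneOn (F := fun i => x q - x i) hw.partialSum_nonneg
    (fun i hi j hj hij => sub_le_sub_left (hx hi hj hij) _)
    (fun i hi => sub_nonneg.2 (hx (by simpa using hi) ⟨hw.le, le_rfl⟩ (mem_Icc.1 hi).2))
  simp only [mul_sub, sum_sub_distrib, ← sum_mul, hw.sum_eq_one, one_mul] at h
  linarith

theorem sum_mul_mem (hw : JensenSteffensenWeights t p q) (hx : MonotoneOn x (Set.Icc p q))
    {I : Set ℝ} (hI : Convex ℝ I) (hxI : ∀ i ∈ Icc p q, x i ∈ I) :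
    ∑ i ∈ Icc p q, t i * x i ∈ I :=
  hI.ordConnected.out (hxI p (by simp [hw.le])) (hxI q (by simp [hw.le]))
    ⟨hw.le_sum_mul hx, hw.sum_mul_le hx⟩

theorem le_sum_mul_comp (hw : JensenSteffensenWeights t p q) (hx : MonotoneOn x (Set.Icc p q))
    {G : ℝ → ℝ} {c : ℝ} (hxc : x p ≤ c) (hGl : AntitoneOn G (Set.Icc (x p) c))
    (hGr : MonotoneOn G (Set.Icc c (x q))) :
    G c ≤ ∑ i ∈ Icc p q, t i * G (x i) := by
  classical
  have hx' : ∀ i j, p ≤ i → i ≤ j → j ≤ q → x i ≤ x j :=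
    fun i j hi hij hj => hx ⟨hi, by omega⟩ ⟨by omega, hj⟩ hij
  -- `m` is the last index with `x m ≤ c`: the block `[p, m]` lies left of `c`, `[m + 1, q]` right.
  set m := Nat.findGreatest (fun j => x j ≤ c) q
  have hpm : p ≤ m := Nat.le_findGreatest hw.le hxc
  have hmq : m ≤ q := Nat.findGreatest_le q
  have hxm : x m ≤ c := Nat.findGreatest_spec (P := fun j => x j ≤ c) hw.le hxc
  have hcx : ∀ i ∈ Icc (m + 1) q, c < x i := fun i hi =>
    not_le.1 <| Nat.findGreatest_is_greatest (P := fun j => x j ≤ c)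
      (by simp at hi; omega) (mem_Icc.1 hi).2
  have hleft : 0 ≤ ∑ i ∈ Icc p m, t i * (G (x i) - G c) := by
    have hmem : ∀ i ∈ Set.Icc p m, x i ∈ Set.Icc (x p) c :=
      fun i ⟨hpi, him⟩ => ⟨hx' p i le_rfl hpi (by omega), (hx' i m hpi him hmq).trans hxm⟩
    refine sum_mul_nonneg_of_antitoneOn
      (fun j hj => hw.partialSum_nonneg j (by simp at hj ⊢; omega))
      (fun i hi j hj hij => sub_le_sub_right
        (hGl (hmem i hi) (hmem j hj) (hx' i j hi.1 hij (hj.2.trans hmq))) _)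
      (fun i hi => sub_nonneg.2 ?_)
    have hi' := hmem i (by simpa using hi)
    exact hGl hi' ⟨hxc, le_rfl⟩ hi'.2
  have hright : 0 ≤ ∑ i ∈ Icc (m + 1) q, t i * (G (x i) - G c) := by
    have hmem : ∀ i ∈ Set.Icc (m + 1) q, x i ∈ Set.Icc c (x q) :=
      fun i hi => ⟨(hcx i (by simpa using hi)).le, hx' i q (by have := hi.1; omega) hi.2 le_rfl⟩
    refine sum_mul_nonneg_of_monotoneOn
      (fun j hj => hw.tailSum_nonneg j (by simp at hj ⊢; omega))
      (fun i hi j hj hij => sub_le_sub_right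
        (hGr (hmem i hi) (hmem j hj) (hx' i j (by have := hi.1; omega) hij hj.2)) _)
      (fun i hi => sub_nonneg.2 ?_)
    have hi' := hmem i (by simpa using hi)
    exact hGr ⟨le_rfl, hi'.1.trans hi'.2⟩ hi' hi'.1
  have hsplit := sum_Icc_consecutive (fun i => t i * (G (x i) - G c)) (by omega : p ≤ m + 1) hmq
  have htotal : ∑ i ∈ Icc p q, t i * (G (x i) - G c) = ∑ i ∈ Icc p q, t i * G (x i) - G c := by
    simp only [mul_sub, sum_sub_distrib, ← sum_mul, hw.sum_eq_one, one_mul]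
  linarith

theorem map_sum_le (hw : JensenSteffensenWeights t p q) (hx : MonotoneOn x (Set.Icc p q))
    {I : Set ℝ} (hI : Convex ℝ I) (hxI : ∀ i ∈ Icc p q, x i ∈ I) {h h' : ℝ → ℝ}
    (hh : ∀ z ∈ I, HasDerivWithinAt h (h' z) I z) {c : ℝ} (hc : ∑ i ∈ Icc p q, t i * x i = c)
    (hleft : ∀ z ∈ I, z ≤ c → h' z ≤ h' c) (hright : ∀ z ∈ I, c ≤ z → h' c ≤ h' z) :
    h c ≤ ∑ i ∈ Icc p q, t i * h (x i) := by
  have hsub : Set.Icc (x p) (x q) ⊆ I :=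
    hI.ordConnected.out (hxI p (by simp [hw.le])) (hxI q (by simp [hw.le]))
  -- subtracting the tangent line at `c` turns `h` into a function with a valley at `c`
  set H := fun z => h z - h' c * z
  have hH : ∀ z ∈ I, HasDerivWithinAt H (h' z - h' c) I z := fun z hz =>
    (hh z hz).sub ((hasDerivWithinAt_id z I).const_mul (h' c)) |>.congr_deriv (by ring)
  have hHD : ∀ D ⊆ I, ContinuousOn H D ∧
      ∀ z ∈ interior D, HasDerivWithinAt H (h' z - h' c) (interior D) z := fun D hD =>
    ⟨fun z hz => (hH z (hD hz)).continuousWithinAt.mono hD,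
      fun z hz => (hH z (hD (interior_subset hz))).mono (interior_subset.trans hD)⟩
  have hDl : Set.Icc (x p) c ⊆ I := (Set.Icc_subset_Icc_right (hc ▸ hw.sum_mul_le hx)).trans hsub
  have hDr : Set.Icc c (x q) ⊆ I := (Set.Icc_subset_Icc_left (hc ▸ hw.le_sum_mul hx)).trans hsub
  have hHl : AntitoneOn H (Set.Icc (x p) c) :=
    antitoneOn_of_hasDerivWithinAt_nonpos (convex_Icc _ _) (hHD _ hDl).1 (hHD _ hDl).2
      fun z hz => sub_nonpos.2 <| hleft z (hDl (interior_subset hz)) (interior_subset hz).2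
  have hHr : MonotoneOn H (Set.Icc c (x q)) :=
    monotoneOn_of_hasDerivWithinAt_nonneg (convex_Icc _ _) (hHD _ hDr).1 (hHD _ hDr).2
      fun z hz => sub_nonneg.2 <| hright z (hDr (interior_subset hz)) (interior_subset hz).1
  have hval := hw.le_sum_mul_comp hx (hc ▸ hw.le_sum_mul hx) hHl hHr
  simp only [H, mul_sub, sum_sub_distrib, mul_left_comm _ (h' c), ← mul_sum, hc] at hval
  linarith

theorem add_sum_mul_map_sub_le (hw : JensenSteffensenWeights t p q)
    (hx : MonotoneOn x (Set.Icc p q)) {I : Set ℝ} (hI : Convex ℝ I)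
    (hxI : ∀ i ∈ Icc p q, x i ∈ I) {f f' Φ Φ' : ℝ → ℝ}
    (hf : ∀ z ∈ I, HasDerivWithinAt f (f' z) I z) (hΦ : ∀ z, HasDerivAt Φ (Φ' z) z)
    (hΦ0 : Φ 0 = 0) (hΦ' : ∀ z, Φ' (-z) = -Φ' z)
    (hf' : ∀ z ∈ I, ∀ w ∈ I, Φ' (w - z) ≤ f' w - f' z) {c : ℝ}
    (hc : ∑ i ∈ Icc p q, t i * x i = c) :
    f c + ∑ i ∈ Icc p q, t i * Φ (x i - c) ≤ ∑ i ∈ Icc p q, t i * f (x i) := by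
  have hcI : c ∈ I := hc ▸ hw.sum_mul_mem hx hI hxI
  have hΦ'0 : Φ' 0 = 0 := by linarith [neg_zero (G := ℝ) ▸ hΦ' 0]
  have hmain := hw.map_sum_le hx hI hxI (h := fun z => f z - Φ (z - c))
    (h' := fun z => f' z - Φ' (z - c))
    (fun z hz => (hf z hz).sub ((hΦ (z - c)).comp_hasDerivWithinAt z
      ((hasDerivWithinAt_id z I).sub_const c)) |>.congr_deriv (by ring)) hc
    (fun z hz _ => by
      have hΦ'z : Φ' (z - c) = -Φ' (c - z) := by rw [← hΦ', neg_sub]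
      simp only [sub_self, hΦ'0, hΦ'z]
      linarith [hf' z hz c hcI])
    (fun z hz _ => by simp only [sub_self, hΦ'0]; linarith [hf' c hcI z hz])
  simp only [mul_sub, sum_sub_distrib, sub_self, hΦ0] at hmain
  linarith

end JensenSteffensenWeights

theorem jensenSteffensenWeights_div {t : ℕ → ℝ} {p q : ℕ} {Q : ℝ}
    (hQ : ∑ i ∈ Icc p q, t i = Q) (hQ0 : 0 < Q) (h0 : ∀ j ∈ Icc p q, 0 ≤ ∑ i ∈ Icc p j, t i)
    (hle : ∀ j ∈ Icc p q, ∑ i ∈ Icc p j, t i ≤ Q) :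
    JensenSteffensenWeights (fun i => t i / Q) p q where
  sum_eq_one := by rw [← sum_div, hQ, div_self hQ0.ne']
  partialSum_nonneg j hj := by rw [← sum_div]; exact div_nonneg (h0 j hj) hQ0.le
  partialSum_le_one j hj := by rw [← sum_div, div_le_one hQ0]; exact hle j hj

theorem mul_map_sum_div_le {t y : ℕ → ℝ} {p q : ℕ} {Q : ℝ}
    (hQ : ∑ i ∈ Icc p q, t i = Q) (hQ0 : 0 < Q) (h0 : ∀ j ∈ Icc p q, 0 ≤ ∑ i ∈ Icc p j, t i)
    (hle : ∀ j ∈ Icc p q, ∑ i ∈ Icc p j, t i ≤ Q) (hy : MonotoneOn y (Set.Icc p q))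
    {φ φ' : ℝ → ℝ} (hφ : ∀ z, HasDerivAt φ (φ' z) z) (hφ' : Monotone φ') :
    Q * φ ((∑ i ∈ Icc p q, t i * y i) / Q) ≤ ∑ i ∈ Icc p q, t i * φ (y i) := by
  have h := (jensenSteffensenWeights_div hQ hQ0 h0 hle).map_sum_le hy convex_univ
    (fun _ _ => Set.mem_univ _) (fun z _ => (hφ z).hasDerivWithinAt)
    (c := (∑ i ∈ Icc p q, t i * y i) / Q)
    (by rw [sum_div]; exact sum_congr rfl fun i _ => by ring) (fun _ _ hz => hφ' hz)
    (fun _ _ hz => hφ' hz)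
  rw [← le_div_iff₀' hQ0]
  exact h.trans_eq (by rw [sum_div]; exact sum_congr rfl fun i _ => by ring)

section AbsRpow

variable {p : ℝ}

theorem hasDerivAt_abs_rpow_sign (hp : 1 < p) (x : ℝ) :
    HasDerivAt (fun x => |x| ^ p) (Real.sign x * (p * |x| ^ (p - 1))) x := by
  convert hasDerivAt_abs_rpow x hp using 1
  have hp1 : p - 1 = p - 2 + 1 := by ring
  rcases lt_trichotomy x 0 with hx | rfl | hx
  · rw [Real.sign_of_neg hx, abs_of_neg hx, hp1, Real.rpow_add_one (by linarith)]
    ring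
  · simp [Real.zero_rpow (by linarith : p - 1 ≠ 0)]
  · rw [Real.sign_of_pos hx, abs_of_pos hx, hp1, Real.rpow_add_one hx.ne']
    ring

theorem monotone_sign_mul_abs_rpow (hp : 1 < p) :
    Monotone fun w : ℝ => Real.sign w * (p * |w| ^ (p - 1)) := by
  have hnonneg : ∀ w : ℝ, 0 ≤ w → Real.sign w * (p * |w| ^ (p - 1)) = p * w ^ (p - 1) := by
    intro w hw
    rcases hw.eq_or_lt with rfl | hw
    · simp [Real.zero_rpow (by linarith : p - 1 ≠ 0)]
    · rw [Real.sign_of_pos hw, abs_of_pos hw, one_mul]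
  refine monotone_of_odd_of_monotoneOn_nonneg (fun w => by simp [Real.sign_neg]) ?_
  intro a ha b hb hab
  simp only [hnonneg a ha, hnonneg b hb]
  gcongr

theorem mul_abs_mul_div_rpow {s a : ℝ} (hs : 0 < s) (ha : 0 ≤ a) (u : ℝ) :
    s * |a * u / s| ^ p = a ^ p * s ^ (1 - p) * |u| ^ p := by
  rw [abs_div, abs_mul, abs_of_nonneg ha, abs_of_pos hs, Real.div_rpow (by positivity) hs.le,
    Real.mul_rpow ha (abs_nonneg u), Real.rpow_sub hs, Real.rpow_one]
  field_simp

theorem abs_le_rpow_one_div_of_mul_rpow_le {p D S u : ℝ} (hp : 0 < p) (hD : 0 < D)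
    (h : D * |u| ^ p ≤ S) : |u| ≤ (S / D) ^ (1 / p) := by
  rw [one_div, Real.le_rpow_inv_iff_of_pos (abs_nonneg u)
    (div_nonneg ((by positivity : (0 : ℝ) ≤ _).trans h) hD.le) hp, le_div_iff₀' hD]
  exact h

end AbsRpow

theorem add_rpow_mul_abs_sum_div_rpow_le {p : ℝ} (hp : 1 < p) {t y : ℕ → ℝ} {s k n : ℕ}
    (hsk : s ≤ k) (hkn : k ≤ n) (hy : MonotoneOn y (Set.Icc s n))
    (htsum : ∑ i ∈ Icc s n, t i = 1) (hty : ∑ i ∈ Icc s n, t i * y i = 0) {P : ℝ}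
    (hP : ∑ i ∈ Icc s k, t i = P) (hP0 : 0 < P) (hP1 : P < 1)
    (hleft0 : ∀ j ∈ Icc s k, 0 ≤ ∑ i ∈ Icc s j, t i)
    (hleft : ∀ j ∈ Icc s k, ∑ i ∈ Icc s j, t i ≤ P)
    (hright0 : ∀ l ∈ Icc (k + 1) n, 0 ≤ ∑ i ∈ Icc (k + 1) l, t i)
    (hright : ∀ l ∈ Icc (k + 1) n, ∑ i ∈ Icc (k + 1) l, t i ≤ ∑ i ∈ Icc (k + 1) n, t i) :
    (P + P ^ p * (1 - P) ^ (1 - p)) * |(∑ i ∈ Icc s k, t i * y i) / P| ^ p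
      ≤ ∑ i ∈ Icc s n, t i * |y i| ^ p := by
  set u := (∑ i ∈ Icc s k, t i * y i) / P
  have hQ : ∑ i ∈ Icc (k + 1) n, t i = 1 - P := by
    linarith [sum_Icc_consecutive t (by omega : s ≤ k + 1) hkn]
  have hleftBlock := mul_map_sum_div_le hP hP0 hleft0 hleft
    (hy.mono (Set.Icc_subset_Icc_right hkn)) (hasDerivAt_abs_rpow_sign hp)
    (monotone_sign_mul_abs_rpow hp)
  have hrightBlock := mul_map_sum_div_le hQ (by linarith) hright0 (hQ ▸ hright)
    (hy.mono (Set.Icc_subset_Icc_left (by omega))) (hasDerivAt_abs_rpow_sign hp)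
    (monotone_sign_mul_abs_rpow hp)
  -- the right block is centred at `-P u / (1 - P)` because the whole sum is centred at `0`
  have hrightMean : ∑ i ∈ Icc (k + 1) n, t i * y i = -(P * u) := by
    rw [mul_div_cancel₀ _ hP0.ne']
    linarith [sum_Icc_consecutive (fun i => t i * y i) (by omega : s ≤ k + 1) hkn]
  rw [hrightMean, neg_div, abs_neg, mul_abs_mul_div_rpow (by linarith) hP0.le] at hrightBlock
  linarith [sum_Icc_consecutive (fun i => t i * |y i| ^ p) (by omega : s ≤ k + 1) hkn]

theorem stmt_15_general (a b : ℝ) (r : ℝ) (hr : 1 ≤ r)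
    (f f' : ℝ → ℝ)
    (hderiv : ∀ x ∈ Set.Ico a b, HasDerivWithinAt f (f' x) (Set.Ico a b) x)
    (hf' : ∀ x ∈ Set.Ico a b, ∀ y ∈ Set.Ico a b,
      Real.sign (y - x) * ((2*r) * |y - x| ^ (2*r - 1)) ≤ f' y - f' x)
    (n : ℕ) (k : ℕ) (hk1 : 1 ≤ k) (hkn : k ≤ n - 1)
    (x t : ℕ → ℝ)
    (hxmono : ∀ i, 1 ≤ i → i ≤ n - 1 → x i ≤ x (i + 1))
    (hx : ∀ i ∈ Finset.Icc 1 n, x i ∈ Set.Ico a b)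
    (htsum : ∑ i ∈ Finset.Icc 1 n, t i = 1)
    (hpartial : ∀ j, 1 ≤ j → j ≤ n →
      0 ≤ ∑ i ∈ Finset.Icc 1 j, t i ∧ ∑ i ∈ Finset.Icc 1 j, t i ≤ 1)
    (hmaxk : ∀ j, j ≤ k → ∑ i ∈ Finset.Icc 1 j, t i ≤ ∑ i ∈ Finset.Icc 1 k, t i)
    (hblock : ∀ l, k + 1 ≤ l → l ≤ n →
      0 ≤ ∑ i ∈ Finset.Icc (k + 1) l, t i ∧
        ∑ i ∈ Finset.Icc (k + 1) l, t i ≤ ∑ i ∈ Finset.Icc (k + 1) n, t i)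
    (P : ℝ) (hP : P = ∑ i ∈ Finset.Icc 1 k, t i) (hP0 : 0 < P) (hP1 : P < 1)
    (xbar : ℝ) (hxbar : xbar = ∑ i ∈ Finset.Icc 1 n, t i * x i)
    (y : ℕ → ℝ) (hy : ∀ i, y i = x i - xbar) :
    |(∑ i ∈ Finset.Icc 1 k, t i * x i) / P - xbar| ≤
      ((∑ i ∈ Finset.Icc 1 n, t i * |y i| ^ (2*r)) /
        (P + P ^ (2*r) * (1 - P) ^ (1 - 2*r))) ^ (1/(2*r)) ∧
    ((∑ i ∈ Finset.Icc 1 n, t i * |y i| ^ (2*r)) /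
        (P + P ^ (2*r) * (1 - P) ^ (1 - 2*r))) ^ (1/(2*r)) ≤
      (((∑ i ∈ Finset.Icc 1 n, t i * f (x i)) - f xbar) /
        (P + P ^ (2*r) * (1 - P) ^ (1 - 2*r))) ^ (1/(2*r)) := by
  have hp : 1 < 2 * r := by linarith
  obtain rfl : y = fun i => x i - xbar := funext hy
  have hxm : MonotoneOn x (Set.Icc 1 n) := monotoneOn_of_le_add_one Set.ordConnected_Icc
    fun i _ hi hi1 => hxmono i hi.1 (by have := hi1.2; omega)
  have hpartial' := fun j (hj : j ∈ Icc 1 n) => hpartial j (mem_Icc.1 hj).1 (mem_Icc.1 hj).2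
  have hw : JensenSteffensenWeights t 1 n :=
    ⟨htsum, fun j hj => (hpartial' j hj).1, fun j hj => (hpartial' j hj).2⟩
  have hgap := hw.add_sum_mul_map_sub_le hxm (convex_Ico a b) hx hderiv
    (hasDerivAt_abs_rpow_sign hp) (by simp [Real.zero_rpow (by linarith : 2 * r ≠ 0)])
    (fun z => by simp [Real.sign_neg]) hf' hxbar.symm
  have hty : ∑ i ∈ Icc 1 n, t i * (x i - xbar) = 0 := by
    simp only [mul_sub, sum_sub_distrib, ← sum_mul, htsum, hxbar]
    ring
  have hblocks := add_rpow_mul_abs_sum_div_rpow_le hp hk1 (by omega)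
    (fun i hi j hj hij => sub_le_sub_right (hxm hi hj hij) xbar) htsum hty hP.symm hP0 hP1
    (fun j hj => (hpartial' j (by simp at hj ⊢; omega)).1)
    (fun j hj => hP ▸ hmaxk j (mem_Icc.1 hj).2)
    (fun l hl => (hblock l (mem_Icc.1 hl).1 (mem_Icc.1 hl).2).1)
    (fun l hl => (hblock l (mem_Icc.1 hl).1 (mem_Icc.1 hl).2).2)
  have hu : (∑ i ∈ Icc 1 k, t i * (x i - xbar)) / P = (∑ i ∈ Icc 1 k, t i * x i) / P - xbar := by
    simp only [mul_sub, sum_sub_distrib, ← sum_mul, ← hP]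
    field_simp
  rw [hu] at hblocks
  have hD : 0 < P + P ^ (2 * r) * (1 - P) ^ (1 - 2 * r) := by
    have : 0 < 1 - P := by linarith
    positivity
  have hS := (by positivity : (0 : ℝ) ≤ _).trans hblocks
  exact ⟨abs_le_rpow_one_div_of_mul_rpow_le (by linarith) hD hblocks,
    Real.rpow_le_rpow (div_nonneg hS hD.le) (by gcongr; linarith) (by positivity)⟩

/-- Corollary 2 b. of the paper: Jensen–Steffensen type coefficients, block
average bound together with the Jensen-gap bound for a differentiable `f`
uniformly convex with modulus `Φ(x) = x^(2r)` whose derivative satisfies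
`f′(y) − f′(x) ≥ sign(y−x)·Φ′(|y−x|)`. -/
theorem stmt_15 (a b : ℝ) (hab : a < b) (r : ℝ) (hr : 1 ≤ r)
    (f f' : ℝ → ℝ)
    (hderiv : ∀ x ∈ Set.Ico a b, HasDerivWithinAt f (f' x) (Set.Ico a b) x)
    (hf : ∀ x ∈ Set.Ico a b, ∀ y ∈ Set.Ico a b, ∀ s ∈ Set.Icc (0:ℝ) 1,
      f (s * x + (1 - s) * y) + s * (1 - s) * |x - y| ^ (2*r)
        ≤ s * f x + (1 - s) * f y)
    (hf' : ∀ x ∈ Set.Ico a b, ∀ y ∈ Set.Ico a b,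
      Real.sign (y - x) * ((2*r) * |y - x| ^ (2*r - 1)) ≤ f' y - f' x)
    (n : ℕ) (hn : 2 ≤ n) (k : ℕ) (hk1 : 1 ≤ k) (hkn : k ≤ n - 1)
    (x t : ℕ → ℝ)
    (hxmono : ∀ i, 1 ≤ i → i ≤ n - 1 → x i ≤ x (i + 1))
    (hx : ∀ i ∈ Finset.Icc 1 n, x i ∈ Set.Ico a b)
    (htsum : ∑ i ∈ Finset.Icc 1 n, t i = 1)
    (hpartial : ∀ j, 1 ≤ j → j ≤ n →
      0 ≤ ∑ i ∈ Finset.Icc 1 j, t i ∧ ∑ i ∈ Finset.Icc 1 j, t i ≤ 1)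
    (hmaxk : ∀ j, j ≤ k → ∑ i ∈ Finset.Icc 1 j, t i ≤ ∑ i ∈ Finset.Icc 1 k, t i)
    (htk1 : 0 < t (k + 1))
    (hblock : ∀ l, k + 1 ≤ l → l ≤ n →
      0 ≤ ∑ i ∈ Finset.Icc (k + 1) l, t i ∧
        ∑ i ∈ Finset.Icc (k + 1) l, t i ≤ ∑ i ∈ Finset.Icc (k + 1) n, t i)
    (P : ℝ) (hP : P = ∑ i ∈ Finset.Icc 1 k, t i) (hP0 : 0 < P) (hP1 : P < 1)
    (xbar : ℝ) (hxbar : xbar = ∑ i ∈ Finset.Icc 1 n, t i * x i)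
    (y : ℕ → ℝ) (hy : ∀ i, y i = x i - xbar) :
    |(∑ i ∈ Finset.Icc 1 k, t i * x i) / P - xbar| ≤
      ((∑ i ∈ Finset.Icc 1 n, t i * |y i| ^ (2*r)) /
        (P + P ^ (2*r) * (1 - P) ^ (1 - 2*r))) ^ (1/(2*r)) ∧
    ((∑ i ∈ Finset.Icc 1 n, t i * |y i| ^ (2*r)) /
        (P + P ^ (2*r) * (1 - P) ^ (1 - 2*r))) ^ (1/(2*r)) ≤
      (((∑ i ∈ Finset.Icc 1 n, t i * f (x i)) - f xbar) /
        (P + P ^ (2*r) * (1 - P) ^ (1 - 2*r))) ^ (1/(2*r)) :=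
  stmt_15_general a b r hr f f' hderiv hf' n k hk1 hkn x t hxmono hx htsum hpartial hmaxk hblock P
    hP hP0 hP1 xbar hxbar y hy
end

section
/- Let φ : [0,∞) → ℝ be a convex differentiable function with φ′(0) > 0, and define g : [0,∞) → ℝ by g(x) = x·φ(x). Then for every integer n ≥ 1, all x₁,…,xₙ ≥ 0, and all weights α₁,…,αₙ ∈ [0,1] with Σ_{i=1}^n αᵢ = 1, setting x̄ = Σ_{j=1}^n αⱼxⱼ, one has Σ_{i=1}^n αᵢ·g(xᵢ) − g(x̄) ≥ φ′(0)·Σ_{i=1}^n αᵢ·(xᵢ − x̄)². -/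
/-!
Writing `T(x, y) = φ x - φ y - φ'(y) (x - y) ≥ 0` for the tangent-line gap of the convex `φ`,
one has the identity
`x φ(x) - y φ(y) - (φ(y) + y φ'(y)) (x - y) = x T(x, y) + φ'(y) (x - y)²`,
so for `x ≥ 0` the function `g(x) = x φ(x)` lies above its tangent at `y` by at least
`φ'(y) (x - y)² ≥ φ'(0) (x - y)²`, the derivative of a convex function being monotone.
Averaging this at `y = x̄` with the weights `αᵢ` kills the linear term.
-/

open Finset

namespace ConvexOn

variable {S : Set ℝ} {f f' : ℝ → ℝ} {x y d : ℝ}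

lemma add_mul_sub_le_of_hasDerivWithinAt (hf : ConvexOn ℝ S f) (hx : x ∈ S) (hy : y ∈ S)
    (hd : HasDerivWithinAt f d S y) : f y + d * (x - y) ≤ f x := by
  rcases lt_trichotomy x y with hxy | rfl | hxy
  · have hs := hf.slope_le_of_hasDerivWithinAt hx hy hxy hd
    rw [slope_def_field, div_le_iff₀ (sub_pos.2 hxy)] at hs
    linarith
  · simp
  · have hs := hf.le_slope_of_hasDerivWithinAt hy hx hxy hd
    rw [slope_def_field, le_div_iff₀ (sub_pos.2 hxy)] at hs
    linarith

lemma monotoneOn_of_hasDerivWithinAt (hf : ConvexOn ℝ S f)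
    (hd : ∀ x ∈ S, HasDerivWithinAt f (f' x) S x) : MonotoneOn f' S := by
  intro x hx y hy hxy
  rcases hxy.eq_or_lt with rfl | hxy
  · rfl
  exact (hf.le_slope_of_hasDerivWithinAt hx hy hxy (hd x hx)).trans
    (hf.slope_le_of_hasDerivWithinAt hx hy hxy (hd y hy))

lemma mul_sq_sub_le_id_mul_sub_tangent (hf : ConvexOn ℝ S f) (hx : x ∈ S) (hy : y ∈ S)
    (hx₀ : 0 ≤ x) (hd : HasDerivWithinAt f d S y) :
    d * (x - y) ^ 2 ≤ x * f x - y * f y - (f y + y * d) * (x - y) := by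
  have hT := hf.add_mul_sub_le_of_hasDerivWithinAt hx hy hd
  linear_combination mul_nonneg hx₀ (sub_nonneg.2 hT)

end ConvexOn

lemma Finset.mul_sum_mul_sq_sub_le_of_quadratic_lower_bound {ι : Type*} (s : Finset ι)
    (w p : ι → ℝ) (g : ℝ → ℝ) (c m xbar : ℝ) (hw : ∀ i ∈ s, 0 ≤ w i)
    (hw₁ : ∑ i ∈ s, w i = 1) (hxbar : xbar = ∑ i ∈ s, w i * p i)
    (hg : ∀ i ∈ s, m * (p i - xbar) ^ 2 ≤ g (p i) - g xbar - c * (p i - xbar)) :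
    m * ∑ i ∈ s, w i * (p i - xbar) ^ 2 ≤ ∑ i ∈ s, w i * g (p i) - g xbar := by
  calc m * ∑ i ∈ s, w i * (p i - xbar) ^ 2
      = ∑ i ∈ s, w i * (m * (p i - xbar) ^ 2) := by
        rw [mul_sum]
        exact sum_congr rfl fun i _ => by ring
    _ ≤ ∑ i ∈ s, w i * (g (p i) - g xbar - c * (p i - xbar)) :=
        sum_le_sum fun i hi => mul_le_mul_of_nonneg_left (hg i hi) (hw i hi)
    _ = ∑ i ∈ s, w i * g (p i) - (∑ i ∈ s, w i) * g xbar
          - c * (∑ i ∈ s, w i * p i - (∑ i ∈ s, w i) * xbar) := by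
        simp only [sum_mul, mul_sum, ← sum_sub_distrib]
        exact sum_congr rfl fun i _ => by ring
    _ = ∑ i ∈ s, w i * g (p i) - g xbar := by
        rw [hw₁, ← hxbar]
        ring

theorem stmt_16_general (φ φ' : ℝ → ℝ)
    (hconv : ConvexOn ℝ (Set.Ici 0) φ)
    (hderiv : ∀ x ∈ Set.Ici (0:ℝ), HasDerivWithinAt φ (φ' x) (Set.Ici 0) x) :
    ∀ n : ℕ, 1 ≤ n → ∀ x α : ℕ → ℝ,
      (∀ i ∈ Finset.Icc 1 n, 0 ≤ x i) →
      (∀ i ∈ Finset.Icc 1 n, α i ∈ Set.Icc (0:ℝ) 1) →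
      (∑ i ∈ Finset.Icc 1 n, α i = 1) →
      ∀ xbar : ℝ, xbar = ∑ j ∈ Finset.Icc 1 n, α j * x j →
        φ' 0 * ∑ i ∈ Finset.Icc 1 n, α i * (x i - xbar) ^ 2 ≤
          (∑ i ∈ Finset.Icc 1 n, α i * (x i * φ (x i))) - xbar * φ xbar := by
  intro n _ x α hx hα hsum xbar hxbar
  have hxbar₀ : 0 ≤ xbar :=
    hxbar ▸ sum_nonneg fun i hi => mul_nonneg (hα i hi).1 (hx i hi)
  have hmono : φ' 0 ≤ φ' xbar :=
    hconv.monotoneOn_of_hasDerivWithinAt hderiv Set.self_mem_Ici hxbar₀ hxbar₀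
  refine (Icc 1 n).mul_sum_mul_sq_sub_le_of_quadratic_lower_bound α x (fun t => t * φ t)
    (φ xbar + xbar * φ' xbar) (φ' 0) xbar (fun i hi => (hα i hi).1) hsum hxbar fun i hi => ?_
  exact (mul_le_mul_of_nonneg_right hmono (sq_nonneg _)).trans
    (hconv.mul_sq_sub_le_id_mul_sub_tangent (hx i hi) hxbar₀ (hx i hi) (hderiv xbar hxbar₀))

/-- Example 1 of the paper: if `φ` is convex and differentiable on `[0,∞)` with
`φ′(0) > 0`, then `g(x) = x·φ(x)` is strongly convex in the Jensen-gap sense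
with parameter `φ′(0)`. -/
theorem stmt_16 (φ φ' : ℝ → ℝ)
    (hconv : ConvexOn ℝ (Set.Ici 0) φ)
    (hderiv : ∀ x ∈ Set.Ici (0:ℝ), HasDerivWithinAt φ (φ' x) (Set.Ici 0) x)
    (hφ'0 : 0 < φ' 0) :
    ∀ n : ℕ, 1 ≤ n → ∀ x α : ℕ → ℝ,
      (∀ i ∈ Finset.Icc 1 n, 0 ≤ x i) →
      (∀ i ∈ Finset.Icc 1 n, α i ∈ Set.Icc (0:ℝ) 1) →
      (∑ i ∈ Finset.Icc 1 n, α i = 1) →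
      ∀ xbar : ℝ, xbar = ∑ j ∈ Finset.Icc 1 n, α j * x j →
        φ' 0 * ∑ i ∈ Finset.Icc 1 n, α i * (x i - xbar) ^ 2 ≤
          (∑ i ∈ Finset.Icc 1 n, α i * (x i * φ (x i))) - xbar * φ xbar :=
  stmt_16_general φ φ' hconv hderiv
end
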